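/- arXiv:2504.09172 — 10 statements merged into one kernel-verified Lean document; each statement's English description precedes it below -/
import Mathlib

section
/- Let θ > 0. As both u₁ and u₂ tend to −∞, the sum of the two generalized angles β(θ, u₁, u₂) + β(θ, u₂, u₁) tends to π. Precisely: for every ε > 0 there exists M > 0 such that for all u₁ < −M and u₂ < −M, |β(θ, u₁, u₂) + β(θ, u₂, u₁) − π| < ε. -/
open Real

/-- The generalized angle `β₁` of a `(1,1,0)` type generalized hyperbolic triangle,
as an explicit function of `θ, u₁, u₂`. -/
noncomputable def genAngle (θ u₁ u₂ : ℝ) : ℝ :=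
  π / 2 - Real.arctan ((u₁ ^ 2 - u₂ ^ 2 - 4 * θ ^ 2) / (4 * θ * u₁))

lemma my_arctan_nonneg {x : ℝ} (hx : 0 ≤ x) : 0 ≤ Real.arctan x := by
  rw [← Real.arctan_zero]
  exact Real.arctan_strictMono.monotone hx

lemma my_arctan_le_self {x : ℝ} (hx : 0 ≤ x) : Real.arctan x ≤ x := by
  have h1 : 0 ≤ Real.arctan x := my_arctan_nonneg hx
  calc Real.arctan x ≤ Real.tan (Real.arctan x) :=
        Real.le_tan h1 (Real.arctan_lt_pi_div_two x)
    _ = x := Real.tan_arctan x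

lemma my_abs_arctan_le (x : ℝ) : |Real.arctan x| ≤ |x| := by
  rcases le_or_gt 0 x with h | h
  · rw [abs_of_nonneg h, abs_of_nonneg (my_arctan_nonneg h)]
    exact my_arctan_le_self h
  · have h' : 0 ≤ -x := by linarith
    have h2 : Real.arctan x ≤ 0 := by
      rw [← Real.arctan_zero]; exact Real.arctan_strictMono.monotone h.le
    rw [abs_of_neg h, abs_of_nonpos h2, ← Real.arctan_neg]
    exact my_arctan_le_self h'

set_option maxHeartbeats 2000000 in
theorem genAngle_sum_tendsto_pi (θ : ℝ) (hθ : 0 < θ) :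
    ∀ ε > 0, ∃ M > 0, ∀ u₁ : ℝ, u₁ < -M → ∀ u₂ : ℝ, u₂ < -M →
      |genAngle θ u₁ u₂ + genAngle θ u₂ u₁ - π| < ε := by
  intro ε hε
  refine ⟨max (2 * θ) (8 * θ / ε), lt_max_of_lt_left (by linarith), ?_⟩
  intro a ha b hb
  set M := max (2 * θ) (8 * θ / ε) with hMdef
  have hM1 : 2 * θ ≤ M := le_max_left _ _
  have hM2 : 8 * θ / ε ≤ M := le_max_right _ _
  have hMpos : 0 < M := lt_of_lt_of_le (by linarith) hM1
  have ha0 : a < -M := ha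
  have hb0 : b < -M := hb
  have haneg : a < 0 := by linarith
  have hbneg : b < 0 := by linarith
  have hθa : 4 * θ * a ≠ 0 := by
    have : 4 * θ * a < 0 := by nlinarith
    exact this.ne
  have hθb : 4 * θ * b ≠ 0 := by
    have : 4 * θ * b < 0 := by nlinarith
    exact this.ne
  set A := (a ^ 2 - b ^ 2 - 4 * θ ^ 2) / (4 * θ * a) with hA
  set B := (b ^ 2 - a ^ 2 - 4 * θ ^ 2) / (4 * θ * b) with hB
  have habM : M ^ 2 < a * b := by nlinarith
  have habpos : 0 < a * b := mul_pos_of_neg_of_neg haneg hbneg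
  set E : ℝ := (a - b) ^ 2 + (2 * θ) ^ 2 with hEdef
  set D : ℝ := (a + b) ^ 2 * (a - b) ^ 2 + 4 * (a * b) * (2 * θ) ^ 2 - (2 * θ) ^ 4
    with hDdef
  have hEpos : 0 < E := by positivity
  have ht2 : (2 * θ) ^ 2 ≤ M ^ 2 := by nlinarith
  have hD3 : 3 * (a * b) * E ≤ D := by
    have h1 : 0 ≤ (a ^ 2 - a * b + b ^ 2) * (a - b) ^ 2 := by nlinarith [sq_nonneg (a - b)]
    have h2 : 0 ≤ (2 * θ) ^ 2 * (a * b - (2 * θ) ^ 2) := by nlinarith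
    nlinarith
  have hDpos : 0 < D := lt_of_lt_of_le (by positivity) hD3
  have hAB : A * B < 1 := by
    have key : 1 - A * B = D / ((4 * θ * a) * (4 * θ * b)) := by
      rw [hA, hB, hDdef]
      field_simp [haneg.ne, hbneg.ne, hθ.ne']
      ring
    have : 0 < 1 - A * B := by
      rw [key]
      apply div_pos hDpos
      have h16 : (4 * θ * a) * (4 * θ * b) = 16 * θ ^ 2 * (a * b) := by ring
      rw [h16]; positivity
    linarith
  set C : ℝ := -(2 * (2 * θ) * (a + b) * E) / D with hCdef
  have hsum : Real.arctan A + Real.arctan B = Real.arctan C := by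
    rw [Real.arctan_add hAB]
    congr 1
    rw [hA, hB, hCdef, hDdef, hEdef]
    rw [div_eq_div_iff]
    · field_simp [haneg.ne, hbneg.ne, hθ.ne']
      ring
    · have key : 1 - A * B = D / ((4 * θ * a) * (4 * θ * b)) := by
        rw [hA, hB, hDdef]; field_simp [haneg.ne, hbneg.ne, hθ.ne']; ring
      rw [← hA, ← hB]
      linarith [hAB]
    · exact hDpos.ne'
  have hCpos : 0 < C := by
    rw [hCdef]
    apply div_pos _ hDpos
    have hab2 : 0 < -(a + b) := by linarith
    have hh : -(2 * (2 * θ) * (a + b) * E) = 4 * (θ * (-(a + b)) * E) := by ring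
    rw [hh]
    have := mul_pos (mul_pos hθ hab2) hEpos
    linarith
  have hCbound : C < ε := by
    rw [hCdef, div_lt_iff₀ hDpos]
    have hεa : 8 * θ < ε * (-a) := by
      have : 8 * θ ≤ ε * M := by
        rw [div_le_iff₀ hε] at hM2; linarith
      nlinarith
    have hεb : 8 * θ < ε * (-b) := by
      have : 8 * θ ≤ ε * M := by
        rw [div_le_iff₀ hε] at hM2; linarith
      nlinarith
    have h1 : -(2 * (2 * θ) * (a + b) * E) < ε * (3 * (a * b) * E) := by
      have : 4 * θ * (-a - b) < 3 * ε * (a * b) := by nlinarith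
      nlinarith
    have h2 : ε * (3 * (a * b) * E) ≤ ε * D := by
      apply mul_le_mul_of_nonneg_left hD3 hε.le
    linarith
  have hfinal : genAngle θ a b + genAngle θ b a - π = -(Real.arctan A + Real.arctan B) := by
    simp only [genAngle, hA, hB]
    ring
  rw [hfinal, hsum, abs_neg]
  calc |Real.arctan C| ≤ |C| := my_abs_arctan_le C
    _ = C := abs_of_pos hCpos
    _ < ε := hCbound
end

section
/- Let θ > 0 and u₁, u₂ < 0. Then the partial derivatives of the generalized angle β satisfy ∂β/∂u₁(θ, u₁, u₂) = −cosh(l₁₂) · ∂β/∂u₂(θ, u₁, u₂), where cosh(l₁₂) = (4θ² + u₁² + u₂²)/(2u₁u₂) is the hyperbolic cosine of the generalized length of the edge opposite to the angle θ. (Here ∂β/∂u₁ and ∂β/∂u₂ denote the derivatives of the explicit function β(θ, ·, ·) in its second and third arguments respectively.) -/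
open Real

theorem genAngle_deriv_relation (θ u₁ u₂ : ℝ) (hθ : 0 < θ) (h₁ : u₁ < 0) (h₂ : u₂ < 0) :
    deriv (fun x => genAngle θ x u₂) u₁ =
      -((4 * θ ^ 2 + u₁ ^ 2 + u₂ ^ 2) / (2 * u₁ * u₂)) *
        deriv (fun y => genAngle θ u₁ y) u₂ := by
  have hθ' : θ ≠ 0 := ne_of_gt hθ
  have h₁' : u₁ ≠ 0 := ne_of_lt h₁
  have h₂' : u₂ ≠ 0 := ne_of_lt h₂
  have hden : 4 * θ * u₁ ≠ 0 := by positivity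
  set f : ℝ := (u₁ ^ 2 - u₂ ^ 2 - 4 * θ ^ 2) / (4 * θ * u₁) with hfdef
  -- derivative in u₁
  have hf1 : HasDerivAt (fun x : ℝ => (x ^ 2 - u₂ ^ 2 - 4 * θ ^ 2) / (4 * θ * x))
      ((u₁ ^ 2 + u₂ ^ 2 + 4 * θ ^ 2) / (4 * θ * u₁ ^ 2)) u₁ := by
    have hnum : HasDerivAt (fun x : ℝ => x ^ 2 - u₂ ^ 2 - 4 * θ ^ 2) (2 * u₁) u₁ := by
      simpa using (((hasDerivAt_pow 2 u₁).sub_const (u₂ ^ 2)).sub_const (4 * θ ^ 2))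
    have hd : HasDerivAt (fun x : ℝ => 4 * θ * x) (4 * θ) u₁ := by
      simpa using (hasDerivAt_id u₁).const_mul (4 * θ)
    have := hnum.div hd hden
    refine this.congr_deriv ?_
    rw [div_eq_div_iff (by positivity) (by positivity)]
    ring
  have hf2 : HasDerivAt (fun y : ℝ => (u₁ ^ 2 - y ^ 2 - 4 * θ ^ 2) / (4 * θ * u₁))
      (-(2 * u₂) / (4 * θ * u₁)) u₂ := by
    have hnum : HasDerivAt (fun y : ℝ => u₁ ^ 2 - y ^ 2 - 4 * θ ^ 2) (-(2 * u₂)) u₂ := by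
      simpa using ((hasDerivAt_pow 2 u₂).const_sub (u₁ ^ 2)).sub_const (4 * θ ^ 2)
    simpa using hnum.div_const (4 * θ * u₁)
  have hA1 : HasDerivAt (fun x => genAngle θ x u₂)
      (-((u₁ ^ 2 + u₂ ^ 2 + 4 * θ ^ 2) / (4 * θ * u₁ ^ 2) / (1 + f ^ 2))) u₁ := by
    have := ((Real.hasDerivAt_arctan f).comp u₁ hf1).const_sub (π / 2)
    simpa [genAngle, div_eq_mul_inv, mul_comm] using this
  have hA2 : HasDerivAt (fun y => genAngle θ u₁ y)
      (-(-(2 * u₂) / (4 * θ * u₁) / (1 + f ^ 2))) u₂ := by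
    have := ((Real.hasDerivAt_arctan f).comp u₂ hf2).const_sub (π / 2)
    simpa [genAngle, div_eq_mul_inv, mul_comm] using this
  rw [hA1.deriv, hA2.deriv]
  have hpos : 1 + f ^ 2 ≠ 0 := by positivity
  field_simp
  ring
end

section
/- Let θ > 0 and u₁, u₂ < 0. Then ∂β/∂u₂(θ, u₁, u₂) = 8θu₁u₂ / ((4θ² + u₁² + u₂²)² − 4u₁²u₂²), and in particular ∂β/∂u₂(θ, u₁, u₂) > 0. (Here ∂β/∂u₂ denotes the derivative of the explicit function β(θ, u₁, ·) in its third argument.) -/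
open Real

theorem genAngle_deriv_second_arg (θ u₁ u₂ : ℝ) (hθ : 0 < θ) (h₁ : u₁ < 0) (h₂ : u₂ < 0) :
    deriv (fun y => genAngle θ u₁ y) u₂ =
      8 * θ * u₁ * u₂ / ((4 * θ ^ 2 + u₁ ^ 2 + u₂ ^ 2) ^ 2 - 4 * u₁ ^ 2 * u₂ ^ 2) ∧
    0 < deriv (fun y => genAngle θ u₁ y) u₂ := by
  have hc : (4 * θ * u₁) ≠ 0 := by
    have := mul_neg_of_pos_of_neg (by linarith : (0:ℝ) < 4 * θ) h₁
    nlinarith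
  have hf : HasDerivAt (fun y : ℝ => (u₁ ^ 2 - y ^ 2 - 4 * θ ^ 2) / (4 * θ * u₁))
      ((-2 * u₂) / (4 * θ * u₁)) u₂ := by
    have h : HasDerivAt (fun y : ℝ => u₁ ^ 2 - y ^ 2 - 4 * θ ^ 2) (-2 * u₂) u₂ := by
      have := ((hasDerivAt_pow 2 u₂).const_sub (u₁ ^ 2)).sub_const (4 * θ ^ 2)
      simpa using this
    exact h.div_const _
  set x := (u₁ ^ 2 - u₂ ^ 2 - 4 * θ ^ 2) / (4 * θ * u₁) with hx
  have harctan : HasDerivAt (fun y : ℝ => genAngle θ u₁ y)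
      (-(1 / (1 + x ^ 2) * ((-2 * u₂) / (4 * θ * u₁)))) u₂ := by
    have := ((Real.hasDerivAt_arctan x).comp u₂ hf).const_sub (π / 2)
    simpa [genAngle, mul_comm] using this
  have hD : ((4 * θ ^ 2 + u₁ ^ 2 + u₂ ^ 2) ^ 2 - 4 * u₁ ^ 2 * u₂ ^ 2) =
      16 * θ ^ 2 * u₁ ^ 2 + (u₁ ^ 2 - u₂ ^ 2 - 4 * θ ^ 2) ^ 2 := by ring
  have hDpos : 0 < (4 * θ ^ 2 + u₁ ^ 2 + u₂ ^ 2) ^ 2 - 4 * u₁ ^ 2 * u₂ ^ 2 := by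
    rw [hD]
    have : 0 < θ ^ 2 * u₁ ^ 2 :=
      mul_pos (pow_pos hθ 2) (pow_pos (neg_pos.mpr h₁) 2 |>.trans_eq (by ring))
    nlinarith [sq_nonneg (u₁ ^ 2 - u₂ ^ 2 - 4 * θ ^ 2)]
  have heq : deriv (fun y => genAngle θ u₁ y) u₂ =
      8 * θ * u₁ * u₂ / ((4 * θ ^ 2 + u₁ ^ 2 + u₂ ^ 2) ^ 2 - 4 * u₁ ^ 2 * u₂ ^ 2) := by
    rw [harctan.deriv, hx]
    have h1x : (1 + ((u₁ ^ 2 - u₂ ^ 2 - 4 * θ ^ 2) / (4 * θ * u₁)) ^ 2) ≠ 0 := by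
      have := sq_nonneg ((u₁ ^ 2 - u₂ ^ 2 - 4 * θ ^ 2) / (4 * θ * u₁))
      nlinarith
    have e : 1 + ((u₁ ^ 2 - u₂ ^ 2 - 4 * θ ^ 2) / (4 * θ * u₁)) ^ 2 =
        ((4 * θ ^ 2 + u₁ ^ 2 + u₂ ^ 2) ^ 2 - 4 * u₁ ^ 2 * u₂ ^ 2) / (4 * θ * u₁) ^ 2 := by
      rw [hD]; field_simp [h₁.ne, hθ.ne']; ring
    rw [e]
    field_simp [hDpos.ne']
    ring
  refine ⟨heq, ?_⟩
  rw [heq]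
  have hnum : 0 < 8 * θ * u₁ * u₂ := by
    have := mul_pos_of_neg_of_neg h₁ h₂
    nlinarith
  exact div_pos hnum hDpos
end

section
/- Let θ > 0. For every (u₁, u₂) ∈ (−∞, 0)², the Jacobian matrix of the map (u₁, u₂) ↦ (β(θ, u₁, u₂), β(θ, u₂, u₁)) is symmetric and negative definite; that is, ∂β/∂u₂(θ, u₁, u₂) = ∂β/∂u₂(θ, u₂, u₁) evaluated symmetrically (the two mixed partial derivatives agree), the diagonal entries ∂β/∂u₁(θ, u₁, u₂) and ∂β/∂u₁(θ, u₂, u₁) are negative, and the determinant ∂β/∂u₁(θ, u₁, u₂)·∂β/∂u₁(θ, u₂, u₁) − (∂β/∂u₂(θ, u₁, u₂))² is positive. -/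
open Real

lemma genAngle_deriv_right (θ u₁ u₂ : ℝ) (hθ : θ ≠ 0) (h1 : u₁ ≠ 0) :
    deriv (fun y => genAngle θ u₁ y) u₂ =
      8 * θ * u₁ * u₂ / (16 * θ ^ 2 * u₁ ^ 2 + (u₁ ^ 2 - u₂ ^ 2 - 4 * θ ^ 2) ^ 2) := by
  have hden : (4 : ℝ) * θ * u₁ ≠ 0 := by positivity
  set f : ℝ := (u₁ ^ 2 - u₂ ^ 2 - 4 * θ ^ 2) / (4 * θ * u₁) with hf
  have hinner : HasDerivAt (fun y : ℝ => (u₁ ^ 2 - y ^ 2 - 4 * θ ^ 2) / (4 * θ * u₁))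
      (-(2 * u₂) / (4 * θ * u₁)) u₂ := by
    have : HasDerivAt (fun y : ℝ => u₁ ^ 2 - y ^ 2 - 4 * θ ^ 2) (-(2 * u₂)) u₂ := by
      have h := ((hasDerivAt_pow 2 u₂).const_sub (u₁ ^ 2)).sub_const (4 * θ ^ 2)
      simpa using h
    exact this.div_const _
  have harctan : HasDerivAt (fun y : ℝ =>
      Real.arctan ((u₁ ^ 2 - y ^ 2 - 4 * θ ^ 2) / (4 * θ * u₁)))
      (1 / (1 + f ^ 2) * (-(2 * u₂) / (4 * θ * u₁))) u₂ :=
    by have := (Real.hasDerivAt_arctan f).comp u₂ hinner; exact this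
  have hmain : HasDerivAt (fun y => genAngle θ u₁ y)
      (-(1 / (1 + f ^ 2) * (-(2 * u₂) / (4 * θ * u₁)))) u₂ := by
    simpa [genAngle] using harctan.const_sub (π / 2)
  rw [hmain.deriv]
  have h1f : (1 : ℝ) + f ^ 2 ≠ 0 := by positivity
  have hD : (16 * θ ^ 2 * u₁ ^ 2 + (u₁ ^ 2 - u₂ ^ 2 - 4 * θ ^ 2) ^ 2) ≠ 0 := by positivity
  rw [hf] at h1f ⊢
  field_simp
  ring

lemma genAngle_deriv_left (θ u₁ u₂ : ℝ) (hθ : θ ≠ 0) (h1 : u₁ ≠ 0) :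
    deriv (fun x => genAngle θ x u₂) u₁ =
      -(4 * θ * (u₁ ^ 2 + u₂ ^ 2 + 4 * θ ^ 2)) /
        (16 * θ ^ 2 * u₁ ^ 2 + (u₁ ^ 2 - u₂ ^ 2 - 4 * θ ^ 2) ^ 2) := by
  have hden : (4 : ℝ) * θ * u₁ ≠ 0 := by positivity
  set f : ℝ := (u₁ ^ 2 - u₂ ^ 2 - 4 * θ ^ 2) / (4 * θ * u₁) with hf
  have hnum : HasDerivAt (fun x : ℝ => x ^ 2 - u₂ ^ 2 - 4 * θ ^ 2) (2 * u₁) u₁ := by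
    have h := ((hasDerivAt_pow 2 u₁).sub_const (u₂ ^ 2)).sub_const (4 * θ ^ 2)
    simpa using h
  have hden' : HasDerivAt (fun x : ℝ => 4 * θ * x) (4 * θ) u₁ := by
    simpa using (hasDerivAt_id u₁).const_mul (4 * θ)
  have hinner : HasDerivAt (fun x : ℝ => (x ^ 2 - u₂ ^ 2 - 4 * θ ^ 2) / (4 * θ * x))
      ((2 * u₁ * (4 * θ * u₁) - (u₁ ^ 2 - u₂ ^ 2 - 4 * θ ^ 2) * (4 * θ)) / (4 * θ * u₁) ^ 2)
      u₁ := hnum.div hden' hden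
  have harctan : HasDerivAt (fun x : ℝ =>
      Real.arctan ((x ^ 2 - u₂ ^ 2 - 4 * θ ^ 2) / (4 * θ * x)))
      (1 / (1 + f ^ 2) *
        ((2 * u₁ * (4 * θ * u₁) - (u₁ ^ 2 - u₂ ^ 2 - 4 * θ ^ 2) * (4 * θ)) / (4 * θ * u₁) ^ 2))
      u₁ := by have := (Real.hasDerivAt_arctan f).comp u₁ hinner; exact this
  have hmain : HasDerivAt (fun x => genAngle θ x u₂)
      (-(1 / (1 + f ^ 2) *
        ((2 * u₁ * (4 * θ * u₁) - (u₁ ^ 2 - u₂ ^ 2 - 4 * θ ^ 2) * (4 * θ)) / (4 * θ * u₁) ^ 2)))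
      u₁ := by
    simpa [genAngle] using harctan.const_sub (π / 2)
  rw [hmain.deriv]
  have h1f : (1 : ℝ) + f ^ 2 ≠ 0 := by positivity
  have hD : (16 * θ ^ 2 * u₁ ^ 2 + (u₁ ^ 2 - u₂ ^ 2 - 4 * θ ^ 2) ^ 2) ≠ 0 := by positivity
  rw [hf] at h1f ⊢
  field_simp
  ring

theorem genAngle_jacobian_symm_negDef (θ : ℝ) (hθ : 0 < θ) :
    ∀ u₁ u₂ : ℝ, u₁ < 0 → u₂ < 0 →
      (deriv (fun y => genAngle θ u₁ y) u₂ = deriv (fun y => genAngle θ u₂ y) u₁) ∧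
      deriv (fun x => genAngle θ x u₂) u₁ < 0 ∧
      deriv (fun x => genAngle θ x u₁) u₂ < 0 ∧
      0 < deriv (fun x => genAngle θ x u₂) u₁ * deriv (fun x => genAngle θ x u₁) u₂ -
          (deriv (fun y => genAngle θ u₁ y) u₂) ^ 2 := by
  intro u₁ u₂ h1 h2
  have hθ' : θ ≠ 0 := ne_of_gt hθ
  have h1' : u₁ ≠ 0 := ne_of_lt h1
  have h2' : u₂ ≠ 0 := ne_of_lt h2
  have hD1 : 0 < 16 * θ ^ 2 * u₁ ^ 2 + (u₁ ^ 2 - u₂ ^ 2 - 4 * θ ^ 2) ^ 2 := by positivity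
  have hD2 : 0 < 16 * θ ^ 2 * u₂ ^ 2 + (u₂ ^ 2 - u₁ ^ 2 - 4 * θ ^ 2) ^ 2 := by positivity
  have hDeq : 16 * θ ^ 2 * u₂ ^ 2 + (u₂ ^ 2 - u₁ ^ 2 - 4 * θ ^ 2) ^ 2
      = 16 * θ ^ 2 * u₁ ^ 2 + (u₁ ^ 2 - u₂ ^ 2 - 4 * θ ^ 2) ^ 2 := by ring
  have e12 := genAngle_deriv_right θ u₁ u₂ hθ' h1'
  have e21 := genAngle_deriv_right θ u₂ u₁ hθ' h2'
  have d1 := genAngle_deriv_left θ u₁ u₂ hθ' h1'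
  have d2 := genAngle_deriv_left θ u₂ u₁ hθ' h2'
  rw [hDeq] at e21 d2
  refine ⟨?_, ?_, ?_, ?_⟩
  · rw [e12, e21]; ring_nf
  · rw [d1]
    apply div_neg_of_neg_of_pos _ hD1
    have : 0 < u₁ ^ 2 + u₂ ^ 2 + 4 * θ ^ 2 := by positivity
    nlinarith
  · rw [d2]
    apply div_neg_of_neg_of_pos _ hD1
    have : 0 < u₂ ^ 2 + u₁ ^ 2 + 4 * θ ^ 2 := by positivity
    nlinarith
  · rw [e12, d1, d2]
    have key : -(4 * θ * (u₁ ^ 2 + u₂ ^ 2 + 4 * θ ^ 2)) /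
          (16 * θ ^ 2 * u₁ ^ 2 + (u₁ ^ 2 - u₂ ^ 2 - 4 * θ ^ 2) ^ 2) *
          (-(4 * θ * (u₂ ^ 2 + u₁ ^ 2 + 4 * θ ^ 2)) /
          (16 * θ ^ 2 * u₁ ^ 2 + (u₁ ^ 2 - u₂ ^ 2 - 4 * θ ^ 2) ^ 2)) -
          (8 * θ * u₁ * u₂ / (16 * θ ^ 2 * u₁ ^ 2 + (u₁ ^ 2 - u₂ ^ 2 - 4 * θ ^ 2) ^ 2)) ^ 2
        = 16 * θ ^ 2 * ((u₁ - u₂) ^ 2 + 4 * θ ^ 2) * ((u₁ + u₂) ^ 2 + 4 * θ ^ 2) /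
          (16 * θ ^ 2 * u₁ ^ 2 + (u₁ ^ 2 - u₂ ^ 2 - 4 * θ ^ 2) ^ 2) ^ 2 := by
      field_simp
      ring
    rw [key]
    positivity
end

section
/- Let θ > 0, r₁, r₂ ∈ ℝ, l ∈ ℝ and β₁ ∈ (0, π) satisfy the cosine and sine laws of a (1,1,0) type generalized hyperbolic triangle: cosh(l) = (θ²/2)·e^{r₁+r₂} + cosh(r₁ − r₂), sin(β₁)·sinh(l) = θ·e^{r₂}, and cos(β₁)·e^{r₁}·sinh(l) = −e^{r₂} + e^{r₁}·cosh(l). Then cot(β₁) = (θ² + e^{−2r₂} − e^{−2r₁})/(2θ·e^{−r₁}). -/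
open Real

theorem cot_formula_110 (θ r₁ r₂ l β₁ : ℝ) (hθ : 0 < θ) (hβ₁ : 0 < β₁) (hβ₁' : β₁ < π)
    (hcosh : Real.cosh l = θ ^ 2 / 2 * Real.exp (r₁ + r₂) + Real.cosh (r₁ - r₂))
    (hsin : Real.sin β₁ * Real.sinh l = θ * Real.exp r₂)
    (hcos : Real.cos β₁ * Real.exp r₁ * Real.sinh l = -Real.exp r₂ + Real.exp r₁ * Real.cosh l) :
    Real.cos β₁ / Real.sin β₁ =
      (θ ^ 2 + Real.exp (-2 * r₂) - Real.exp (-2 * r₁)) / (2 * θ * Real.exp (-r₁)) := by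
  have hs : 0 < Real.sin β₁ := Real.sin_pos_of_pos_of_lt_pi hβ₁ hβ₁'
  have hsinh : Real.sinh l ≠ 0 := by
    intro h
    rw [h, mul_zero] at hsin
    nlinarith [Real.exp_pos r₂]
  have h1 : Real.exp r₁ ≠ 0 := (Real.exp_pos r₁).ne'
  have h2 : Real.exp r₂ ≠ 0 := (Real.exp_pos r₂).ne'
  have e1 : Real.exp (r₁ + r₂) = Real.exp r₁ * Real.exp r₂ := Real.exp_add r₁ r₂
  have e2 : Real.cosh (r₁ - r₂) = (Real.exp r₁ / Real.exp r₂ + Real.exp r₂ / Real.exp r₁) / 2 := by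
    rw [Real.cosh_eq, Real.exp_sub, show -(r₁ - r₂) = r₂ - r₁ by ring, Real.exp_sub]
  have e3 : Real.exp (-2 * r₂) = 1 / Real.exp r₂ ^ 2 := by
    rw [show (-2 : ℝ) * r₂ = -(r₂ + r₂) by ring, Real.exp_neg, Real.exp_add]
    ring
  have e4 : Real.exp (-2 * r₁) = 1 / Real.exp r₁ ^ 2 := by
    rw [show (-2 : ℝ) * r₁ = -(r₁ + r₁) by ring, Real.exp_neg, Real.exp_add]
    ring
  have e5 : Real.exp (-r₁) = 1 / Real.exp r₁ := by rw [Real.exp_neg]; ring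
  have p1 := Real.exp_pos r₁
  have p2 := Real.exp_pos r₂
  rw [div_eq_div_iff hs.ne' (by positivity)]
  rw [e1, e2] at hcosh
  rw [hcosh] at hcos
  field_simp at hcos
  have key : Real.cos β₁ * (2 * θ * Real.exp (-r₁)) * (Real.sinh l * Real.exp r₁) =
      (θ ^ 2 + Real.exp (-2 * r₂) - Real.exp (-2 * r₁)) * Real.sin β₁ *
        (Real.sinh l * Real.exp r₁) := by
    rw [e3, e4, e5]
    field_simp
    apply mul_right_cancel₀ hsinh
    linear_combination (θ * Real.exp r₂) * hcos -
      (Real.exp r₁ ^ 2 * (θ ^ 2 * Real.exp r₂ ^ 2 + 1) - Real.exp r₂ ^ 2) * hsin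
  exact mul_right_cancel₀ (by positivity : Real.sinh l * Real.exp r₁ ≠ 0) key
end

section
/- Suppose every face is incident to at least one edge, i.e. for every f ∈ F there is e ∈ E with s(e) = f or t(e) = f. Then the generalized combinatorial curvature map u ↦ (K_f(u))_{f ∈ F} is injective on the set of u : F → ℝ with u(f) < 0 for all f: if u, u' both have all coordinates negative and K_f(u) = K_f(u') for all f ∈ F, then u = u'. -/
open Real Finset

/-- The generalized combinatorial curvature of a `(1,1,0)` type generalized circle pattern
with face set `F`, edge set `E`, incidence maps `sf, tf : E → F` and angle data `θ : E → ℝ`. -/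
noncomputable def curv {F E : Type*} [Fintype E] [DecidableEq F] (sf tf : E → F) (θ : E → ℝ)
    (u : F → ℝ) (f : F) : ℝ :=
  2 * ∑ e ∈ Finset.univ.filter (fun e => sf e = f), genAngle (θ e) (u (sf e)) (u (tf e)) +
  2 * ∑ e ∈ Finset.univ.filter (fun e => tf e = f), genAngle (θ e) (u (tf e)) (u (sf e))

/-- The partial derivative `∂K_f/∂u_g` of the generalized combinatorial curvature map. -/
noncomputable def partialCurv {F E : Type*} [Fintype E] [DecidableEq F] (sf tf : E → F)
    (θ : E → ℝ) (u : F → ℝ) (f g : F) : ℝ :=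
  deriv (fun x => curv sf tf θ (Function.update u g x) f) (u g)


lemma genAngle_mono1_le (θ a a' b : ℝ) (hθ : 0 < θ) (h : a' ≤ a) (ha : a < 0) (ha' : a' < 0) :
    genAngle θ a b ≤ genAngle θ a' b := by
  unfold genAngle
  have harg : (a' ^ 2 - b ^ 2 - 4 * θ ^ 2) / (4 * θ * a') ≤
      (a ^ 2 - b ^ 2 - 4 * θ ^ 2) / (4 * θ * a) := by
    have key : 0 ≤ (a - a') * (a * a' + b ^ 2 + 4 * θ ^ 2) := by
      have h1 : 0 < a * a' := mul_pos_of_neg_of_neg ha ha'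
      have h2 : 0 < θ ^ 2 := pow_pos hθ 2
      nlinarith [sq_nonneg b]
    rw [← neg_div_neg_eq, ← neg_div_neg_eq (a ^ 2 - b ^ 2 - 4 * θ ^ 2),
      div_le_div_iff₀ (by nlinarith) (by nlinarith)]
    nlinarith [mul_nonneg hθ.le key]
  have := Real.arctan_strictMono.monotone harg
  linarith

lemma genAngle_mono1_lt (θ a a' b : ℝ) (hθ : 0 < θ) (h : a' < a) (ha : a < 0) :
    genAngle θ a b < genAngle θ a' b := by
  have ha' : a' < 0 := h.trans ha
  unfold genAngle
  have harg : (a' ^ 2 - b ^ 2 - 4 * θ ^ 2) / (4 * θ * a') <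
      (a ^ 2 - b ^ 2 - 4 * θ ^ 2) / (4 * θ * a) := by
    have key : 0 < (a - a') * (a * a' + b ^ 2 + 4 * θ ^ 2) := by
      have h1 : 0 < a * a' := mul_pos_of_neg_of_neg ha ha'
      have h2 : 0 < θ ^ 2 := pow_pos hθ 2
      nlinarith [sq_nonneg b]
    rw [← neg_div_neg_eq, ← neg_div_neg_eq (a ^ 2 - b ^ 2 - 4 * θ ^ 2),
      div_lt_div_iff₀ (by nlinarith) (by nlinarith)]
    nlinarith [mul_pos hθ key]
  have := Real.arctan_strictMono harg
  linarith

lemma genAngle_mono2_le (θ a b b' : ℝ) (hθ : 0 < θ) (ha : a < 0) (h : b ≤ b') (hb' : b' ≤ 0) :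
    genAngle θ a b ≤ genAngle θ a b' := by
  unfold genAngle
  have harg : (a ^ 2 - b' ^ 2 - 4 * θ ^ 2) / (4 * θ * a) ≤
      (a ^ 2 - b ^ 2 - 4 * θ ^ 2) / (4 * θ * a) := by
    apply div_le_div_of_nonpos_of_le (by nlinarith)
    nlinarith
  have := Real.arctan_strictMono.monotone harg
  linarith

lemma genAngle_diag_lt (θ a b t : ℝ) (hθ : 0 < θ) (ht : 0 < t) (ha : a + t < 0)
    (hb : b + t < 0) : genAngle θ (a + t) (b + t) < genAngle θ a b := by
  have ha0 : a < 0 := by linarith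
  unfold genAngle
  have harg : (a ^ 2 - b ^ 2 - 4 * θ ^ 2) / (4 * θ * a) <
      ((a + t) ^ 2 - (b + t) ^ 2 - 4 * θ ^ 2) / (4 * θ * (a + t)) := by
    have key : 0 < t * ((a - b) ^ 2 + 4 * θ ^ 2) := by
      have h2 : 0 < θ ^ 2 := pow_pos hθ 2
      nlinarith [sq_nonneg (a - b)]
    rw [← neg_div_neg_eq, ← neg_div_neg_eq ((a + t) ^ 2 - (b + t) ^ 2 - 4 * θ ^ 2),
      div_lt_div_iff₀ (by nlinarith) (by nlinarith)]
    nlinarith [mul_pos hθ key]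
  have := Real.arctan_strictMono harg
  linarith

lemma genAngle_key (θ a b a' b' : ℝ) (hθ : 0 < θ) (ha : a < 0) (hb : b < 0) (ha' : a' < 0)
    (hb' : b' < 0) (h1 : 0 < a - a') (h2 : b - b' ≤ a - a') :
    genAngle θ a b < genAngle θ a' b' := by
  rcases le_or_gt (b - b') 0 with hd | hd
  · calc genAngle θ a b ≤ genAngle θ a b' :=
          genAngle_mono2_le θ a b b' hθ ha (by linarith) hb'.le
      _ < genAngle θ a' b' := genAngle_mono1_lt θ a a' b' hθ (by linarith) ha
  · have hkey : genAngle θ (a' + (b - b')) (b' + (b - b')) < genAngle θ a' b' :=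
      genAngle_diag_lt θ a' b' (b - b') hθ hd (by linarith) (by linarith)
    calc genAngle θ a b ≤ genAngle θ (a' + (b - b')) b :=
          genAngle_mono1_le θ a (a' + (b - b')) b hθ (by linarith) ha (by linarith)
      _ = genAngle θ (a' + (b - b')) (b' + (b - b')) := by ring_nf
      _ < genAngle θ a' b' := hkey

lemma exists_curv_lt {F E : Type*} [Fintype F] [Fintype E] [Nonempty F] [DecidableEq F]
    (sf tf : E → F) (θ : E → ℝ) (hθ : ∀ e, 0 < θ e)
    (hcov : ∀ f, ∃ e, sf e = f ∨ tf e = f)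
    (u u' : F → ℝ) (hu : ∀ f, u f < 0) (hu' : ∀ f, u' f < 0)
    (h : ∃ f, u' f < u f) : ∃ f, curv sf tf θ u f < curv sf tf θ u' f := by
  obtain ⟨f₀, -, hmax⟩ := Finset.exists_max_image Finset.univ (fun f => u f - u' f)
    Finset.univ_nonempty
  obtain ⟨f, hf⟩ := h
  have hd0 : 0 < u f₀ - u' f₀ := lt_of_lt_of_le (by linarith) (hmax f (Finset.mem_univ f))
  refine ⟨f₀, ?_⟩
  have h1 : ∀ e ∈ Finset.univ.filter (fun e => sf e = f₀),
      genAngle (θ e) (u (sf e)) (u (tf e)) < genAngle (θ e) (u' (sf e)) (u' (tf e)) := by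
    intro e he
    have hse : sf e = f₀ := (Finset.mem_filter.1 he).2
    exact genAngle_key _ _ _ _ _ (hθ e) (hu _) (hu _) (hu' _) (hu' _)
      (by rw [hse]; exact hd0) (by rw [hse]; exact hmax (tf e) (Finset.mem_univ _))
  have h2 : ∀ e ∈ Finset.univ.filter (fun e => tf e = f₀),
      genAngle (θ e) (u (tf e)) (u (sf e)) < genAngle (θ e) (u' (tf e)) (u' (sf e)) := by
    intro e he
    have hte : tf e = f₀ := (Finset.mem_filter.1 he).2
    exact genAngle_key _ _ _ _ _ (hθ e) (hu _) (hu _) (hu' _) (hu' _)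
      (by rw [hte]; exact hd0) (by rw [hte]; exact hmax (sf e) (Finset.mem_univ _))
  have s1 : ∑ e ∈ Finset.univ.filter (fun e => sf e = f₀),
      genAngle (θ e) (u (sf e)) (u (tf e)) ≤
      ∑ e ∈ Finset.univ.filter (fun e => sf e = f₀),
      genAngle (θ e) (u' (sf e)) (u' (tf e)) :=
    Finset.sum_le_sum fun e he => (h1 e he).le
  have s2 : ∑ e ∈ Finset.univ.filter (fun e => tf e = f₀),
      genAngle (θ e) (u (tf e)) (u (sf e)) ≤
      ∑ e ∈ Finset.univ.filter (fun e => tf e = f₀),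
      genAngle (θ e) (u' (tf e)) (u' (sf e)) :=
    Finset.sum_le_sum fun e he => (h2 e he).le
  rcases hcov f₀ with ⟨e, he | he⟩
  · have hne : (Finset.univ.filter (fun e => sf e = f₀)).Nonempty :=
      ⟨e, Finset.mem_filter.2 ⟨Finset.mem_univ _, he⟩⟩
    have s1' := Finset.sum_lt_sum_of_nonempty hne h1
    simp only [curv]; linarith
  · have hne : (Finset.univ.filter (fun e => tf e = f₀)).Nonempty :=
      ⟨e, Finset.mem_filter.2 ⟨Finset.mem_univ _, he⟩⟩
    have s2' := Finset.sum_lt_sum_of_nonempty hne h2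
    simp only [curv]; linarith


theorem curv_injective {F E : Type*} [Fintype F] [Fintype E] [Nonempty F] [DecidableEq F]
    (sf tf : E → F) (θ : E → ℝ) (hθ : ∀ e, 0 < θ e)
    (hcov : ∀ f, ∃ e, sf e = f ∨ tf e = f)
    (u u' : F → ℝ) (hu : ∀ f, u f < 0) (hu' : ∀ f, u' f < 0)
    (hK : ∀ f, curv sf tf θ u f = curv sf tf θ u' f) : u = u' := by
  by_contra hne
  have hex : ∃ f, u f ≠ u' f := by
    by_contra h
    push_neg at h
    exact hne (funext h)
  obtain ⟨f, hf⟩ := hex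
  rcases lt_or_gt_of_ne hf with h | h
  · obtain ⟨g, hg⟩ := exists_curv_lt sf tf θ hθ hcov u' u hu' hu ⟨f, h⟩
    linarith [hK g]
  · obtain ⟨g, hg⟩ := exists_curv_lt sf tf θ hθ hcov u u' hu hu' ⟨f, h⟩
    linarith [hK g]
end

section
/- Suppose every face is incident to at least one edge. Then for every u : F → ℝ with u(f) < 0 for all f, the Jacobian matrix (∂K_f/∂u_g(u))_{f,g ∈ F} of the generalized combinatorial curvature map is symmetric and negative definite: ∂K_f/∂u_g(u) = ∂K_g/∂u_f(u) for all f, g, and for every nonzero x : F → ℝ one has ∑_{f,g ∈ F} x_f · (∂K_f/∂u_g(u)) · x_g < 0. -/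
open Real Finset

/-! ### Auxiliary definitions and lemmas -/

/-- The common denominator of the partial derivatives of `genAngle`. -/
noncomputable def Dq (θ u₁ u₂ : ℝ) : ℝ := 16*θ^2*u₁^2 + (u₁^2 - u₂^2 - 4*θ^2)^2

lemma Dq_pos {θ u₁ : ℝ} (hθ : θ ≠ 0) (h : u₁ ≠ 0) (u₂ : ℝ) : 0 < Dq θ u₁ u₂ := by
  unfold Dq; positivity

lemma Dq_symm (θ u₁ u₂ : ℝ) : Dq θ u₁ u₂ = Dq θ u₂ u₁ := by unfold Dq; ring

/-- `∂β/∂u₁`. -/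
noncomputable def d1 (θ u₁ u₂ : ℝ) : ℝ := -(4*θ*(u₁^2 + u₂^2 + 4*θ^2)) / Dq θ u₁ u₂
/-- `∂β/∂u₂`. -/
noncomputable def d2 (θ u₁ u₂ : ℝ) : ℝ := 8*θ*u₁*u₂ / Dq θ u₁ u₂

lemma d2_symm (θ u₁ u₂ : ℝ) : d2 θ u₁ u₂ = d2 θ u₂ u₁ := by
  unfold d2; rw [Dq_symm]; ring_nf

lemma hasDerivAt_genAngle_fst {θ u₁ : ℝ} (u₂ : ℝ) (hθ : 0 < θ) (h : u₁ ≠ 0) :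
    HasDerivAt (fun x => genAngle θ x u₂) (d1 θ u₁ u₂) u₁ := by
  have hD : 4*θ*u₁ ≠ 0 := by
    have := hθ.ne'
    positivity
  have hnum : HasDerivAt (fun x : ℝ => x^2 - u₂^2 - 4*θ^2) (2*u₁) u₁ := by
    simpa using ((hasDerivAt_pow 2 u₁).sub_const (u₂^2)).sub_const (4*θ^2)
  have hden : HasDerivAt (fun x : ℝ => 4*θ*x) (4*θ) u₁ := by
    simpa using (hasDerivAt_id u₁).const_mul (4*θ)
  have key := ((hnum.div hden hD).arctan).const_sub (π/2)
  unfold genAngle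
  convert key using 1
  · rfl
  · rfl
  · rfl
  simp only [Pi.div_apply]
  have h1 : (0:ℝ) < 1 + ((u₁^2-u₂^2-4*θ^2)/(4*θ*u₁))^2 := by positivity
  have h2 := (Dq_pos hθ.ne' h u₂).ne'
  unfold d1 Dq at *
  field_simp
  ring

lemma hasDerivAt_genAngle_snd {θ u₂ : ℝ} (u₁ : ℝ) (hθ : 0 < θ) (h : u₁ ≠ 0) :
    HasDerivAt (fun x => genAngle θ u₁ x) (d2 θ u₁ u₂) u₂ := by
  have hD : 4*θ*u₁ ≠ 0 := by have := hθ.ne'; positivity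
  have hnum : HasDerivAt (fun x : ℝ => u₁^2 - x^2 - 4*θ^2) (-(2*u₂)) u₂ := by
    simpa using (((hasDerivAt_pow 2 u₂).const_sub (u₁^2)).sub_const (4*θ^2))
  have key := ((hnum.div_const (4*θ*u₁)).arctan).const_sub (π/2)
  unfold genAngle
  convert key using 1
  · rfl
  · rfl
  have h1 : (0:ℝ) < 1 + ((u₁^2-u₂^2-4*θ^2)/(4*θ*u₁))^2 := by positivity
  have h2 := (Dq_pos hθ.ne' h u₂).ne'
  unfold d2 Dq at *
  field_simp
  ring

lemma hasDerivAt_genAngle_diag {θ u₁ : ℝ} (hθ : 0 < θ) (h : u₁ ≠ 0) :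
    HasDerivAt (fun x => genAngle θ x x) (d1 θ u₁ u₁ + d2 θ u₁ u₁) u₁ := by
  have hD : 4*θ*u₁ ≠ 0 := by have := hθ.ne'; positivity
  have hnum : HasDerivAt (fun x : ℝ => x^2 - x^2 - 4*θ^2) (2*u₁ - 2*u₁) u₁ := by
    have := ((hasDerivAt_pow 2 u₁).sub (hasDerivAt_pow 2 u₁)).sub_const (4*θ^2)
    simpa using this
  have hden : HasDerivAt (fun x : ℝ => 4*θ*x) (4*θ) u₁ := by
    simpa using (hasDerivAt_id u₁).const_mul (4*θ)
  have key := ((hnum.div hden hD).arctan).const_sub (π/2)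
  unfold genAngle
  convert key using 1
  · rfl
  · rfl
  · rfl
  simp only [Pi.div_apply]
  have h1 : (0:ℝ) < 1 + ((u₁^2-u₁^2-4*θ^2)/(4*θ*u₁))^2 := by positivity
  have h2 := (Dq_pos hθ.ne' h u₁).ne'
  unfold d1 d2 Dq at *
  field_simp
  ring

lemma hasDerivAt_genAngle_update {F : Type*} [DecidableEq F] (θ : ℝ) (hθ : 0 < θ)
    (a b g : F) (u : F → ℝ) (hu : ∀ f, u f < 0) :
    HasDerivAt (fun x => genAngle θ (Function.update u g x a) (Function.update u g x b))
      ((if a = g then d1 θ (u a) (u b) else 0) + (if b = g then d2 θ (u a) (u b) else 0))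
      (u g) := by
  by_cases ha : a = g <;> by_cases hb : b = g
  · subst ha; subst hb
    simp only [Function.update_self, if_pos rfl]
    exact hasDerivAt_genAngle_diag hθ (hu _).ne
  · subst ha
    simp only [Function.update_self, Function.update_of_ne hb, if_pos rfl, if_neg hb, add_zero]
    exact hasDerivAt_genAngle_fst (u b) hθ (hu _).ne
  · subst hb
    simp only [Function.update_self, Function.update_of_ne ha, if_pos rfl, if_neg ha, zero_add]
    exact hasDerivAt_genAngle_snd (u a) hθ (hu a).ne
  · simp only [Function.update_of_ne ha, Function.update_of_ne hb, if_neg ha, if_neg hb, add_zero]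
    exact hasDerivAt_const (u g) _

/-- Per-edge contribution to the Jacobian entry `∂K_f/∂u_g`. -/
noncomputable def Tm {F E : Type*} [DecidableEq F] (sf tf : E → F) (θ : E → ℝ) (u : F → ℝ)
    (e : E) (f g : F) : ℝ :=
  (if sf e = f then 2*((if sf e = g then d1 (θ e) (u (sf e)) (u (tf e)) else 0) +
                      (if tf e = g then d2 (θ e) (u (sf e)) (u (tf e)) else 0)) else 0) +
  (if tf e = f then 2*((if tf e = g then d1 (θ e) (u (tf e)) (u (sf e)) else 0) +
                      (if sf e = g then d2 (θ e) (u (tf e)) (u (sf e)) else 0)) else 0)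

lemma partialCurv_eq {F E : Type*} [Fintype E] [DecidableEq F] (sf tf : E → F) (θ : E → ℝ)
    (hθ : ∀ e, 0 < θ e) (u : F → ℝ) (hu : ∀ f, u f < 0) (f g : F) :
    partialCurv sf tf θ u f g = ∑ e, Tm sf tf θ u e f g := by
  have h1 : HasDerivAt
      (fun x => 2 * ∑ e ∈ Finset.univ.filter (fun e => sf e = f),
        genAngle (θ e) (Function.update u g x (sf e)) (Function.update u g x (tf e)))
      (2 * ∑ e ∈ Finset.univ.filter (fun e => sf e = f),
        ((if sf e = g then d1 (θ e) (u (sf e)) (u (tf e)) else 0) +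
         (if tf e = g then d2 (θ e) (u (sf e)) (u (tf e)) else 0))) (u g) :=
    (HasDerivAt.fun_sum fun e _ =>
      hasDerivAt_genAngle_update (θ e) (hθ e) (sf e) (tf e) g u hu).const_mul 2
  have h2 : HasDerivAt
      (fun x => 2 * ∑ e ∈ Finset.univ.filter (fun e => tf e = f),
        genAngle (θ e) (Function.update u g x (tf e)) (Function.update u g x (sf e)))
      (2 * ∑ e ∈ Finset.univ.filter (fun e => tf e = f),
        ((if tf e = g then d1 (θ e) (u (tf e)) (u (sf e)) else 0) +
         (if sf e = g then d2 (θ e) (u (tf e)) (u (sf e)) else 0))) (u g) :=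
    (HasDerivAt.fun_sum fun e _ =>
      hasDerivAt_genAngle_update (θ e) (hθ e) (tf e) (sf e) g u hu).const_mul 2
  have key := (h1.add h2).deriv
  have h3 : partialCurv sf tf θ u f g =
      2 * ∑ e ∈ Finset.univ.filter (fun e => sf e = f),
        ((if sf e = g then d1 (θ e) (u (sf e)) (u (tf e)) else 0) +
         (if tf e = g then d2 (θ e) (u (sf e)) (u (tf e)) else 0)) +
      2 * ∑ e ∈ Finset.univ.filter (fun e => tf e = f),
        ((if tf e = g then d1 (θ e) (u (tf e)) (u (sf e)) else 0) +
         (if sf e = g then d2 (θ e) (u (tf e)) (u (sf e)) else 0)) := by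
    rw [partialCurv, ← key]
    rfl
  rw [h3, Finset.mul_sum, Finset.mul_sum, Finset.sum_filter, Finset.sum_filter,
    ← Finset.sum_add_distrib]
  rfl

lemma Tm_symm {F E : Type*} [DecidableEq F] (sf tf : E → F) (θ : E → ℝ) (u : F → ℝ)
    (e : E) (f g : F) : Tm sf tf θ u e f g = Tm sf tf θ u e g f := by
  unfold Tm
  rw [d2_symm (θ e) (u (tf e)) (u (sf e))]
  split_ifs <;> ring

lemma quad_e {F E : Type*} [Fintype F] [DecidableEq F] (sf tf : E → F) (θ : E → ℝ) (u : F → ℝ)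
    (x : F → ℝ) (e : E) :
    ∑ f, ∑ g, x f * Tm sf tf θ u e f g * x g =
      2 * (d1 (θ e) (u (sf e)) (u (tf e)) * (x (sf e))^2 +
        2 * d2 (θ e) (u (sf e)) (u (tf e)) * (x (sf e) * x (tf e)) +
        d1 (θ e) (u (tf e)) (u (sf e)) * (x (tf e))^2) := by
  unfold Tm
  rw [d2_symm (θ e) (u (tf e)) (u (sf e))]
  simp only [mul_add, add_mul, mul_ite, ite_mul, zero_mul, mul_zero,
    Finset.sum_add_distrib, Finset.sum_ite_eq, Finset.mem_univ, if_true,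
    Finset.sum_ite_irrel, Finset.sum_const_zero]
  ring

lemma quad_key (θ u₁ u₂ xa xb : ℝ) (hθ : 0 < θ) (h1 : u₁ < 0) (h2 : u₂ < 0) :
    2 * (d1 θ u₁ u₂ * xa^2 + 2 * d2 θ u₁ u₂ * (xa * xb) + d1 θ u₂ u₁ * xb^2) =
      -(8*θ/Dq θ u₁ u₂) *
        ((u₁*xa - u₂*xb)^2 + (u₂*xa - u₁*xb)^2 + 4*θ^2*(xa^2 + xb^2)) := by
  have hQ := (Dq_pos hθ.ne' h1.ne u₂).ne'
  unfold d1 d2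
  rw [Dq_symm θ u₂ u₁]
  field_simp
  ring

lemma quad_nonpos (θ u₁ u₂ xa xb : ℝ) (hθ : 0 < θ) (h1 : u₁ < 0) (h2 : u₂ < 0) :
    2 * (d1 θ u₁ u₂ * xa^2 + 2 * d2 θ u₁ u₂ * (xa * xb) + d1 θ u₂ u₁ * xb^2) ≤ 0 := by
  rw [quad_key θ u₁ u₂ xa xb hθ h1 h2]
  have hQ := Dq_pos hθ.ne' h1.ne u₂
  have hS : (0:ℝ) ≤ (u₁*xa - u₂*xb)^2 + (u₂*xa - u₁*xb)^2 + 4*θ^2*(xa^2 + xb^2) := by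
    positivity
  have := mul_nonneg (le_of_lt (div_pos (by positivity : (0:ℝ) < 8*θ) hQ)) hS
  linarith

lemma quad_neg (θ u₁ u₂ xa xb : ℝ) (hθ : 0 < θ) (h1 : u₁ < 0) (h2 : u₂ < 0)
    (hx : xa ≠ 0 ∨ xb ≠ 0) :
    2 * (d1 θ u₁ u₂ * xa^2 + 2 * d2 θ u₁ u₂ * (xa * xb) + d1 θ u₂ u₁ * xb^2) < 0 := by
  rw [quad_key θ u₁ u₂ xa xb hθ h1 h2]
  have hQ := Dq_pos hθ.ne' h1.ne u₂
  have hθ' := hθ.ne'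
  have hS : (0:ℝ) < (u₁*xa - u₂*xb)^2 + (u₂*xa - u₁*xb)^2 + 4*θ^2*(xa^2 + xb^2) := by
    rcases hx with hx | hx <;> positivity
  have := mul_pos (div_pos (by positivity : (0:ℝ) < 8*θ) hQ) hS
  linarith

theorem curv_jacobian_symm_negDef {F E : Type*} [Fintype F] [Fintype E] [Nonempty F]
    [DecidableEq F] (sf tf : E → F) (θ : E → ℝ) (hθ : ∀ e, 0 < θ e)
    (hcov : ∀ f, ∃ e, sf e = f ∨ tf e = f)
    (u : F → ℝ) (hu : ∀ f, u f < 0) :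
    (∀ f g, partialCurv sf tf θ u f g = partialCurv sf tf θ u g f) ∧
    (∀ x : F → ℝ, x ≠ 0 → ∑ f, ∑ g, x f * partialCurv sf tf θ u f g * x g < 0) := by
  constructor
  · intro f g
    rw [partialCurv_eq sf tf θ hθ u hu f g, partialCurv_eq sf tf θ hθ u hu g f]
    exact Finset.sum_congr rfl fun e _ => Tm_symm sf tf θ u e f g
  · intro x hx
    obtain ⟨f0, hf0⟩ := Function.ne_iff.mp hx
    obtain ⟨e0, he0⟩ := hcov f0
    have hmain : ∑ f, ∑ g, x f * partialCurv sf tf θ u f g * x g =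
        ∑ e, 2 * (d1 (θ e) (u (sf e)) (u (tf e)) * (x (sf e))^2 +
          2 * d2 (θ e) (u (sf e)) (u (tf e)) * (x (sf e) * x (tf e)) +
          d1 (θ e) (u (tf e)) (u (sf e)) * (x (tf e))^2) := by
      calc ∑ f, ∑ g, x f * partialCurv sf tf θ u f g * x g
          = ∑ f, ∑ g, ∑ e, x f * Tm sf tf θ u e f g * x g := by
            simp only [partialCurv_eq sf tf θ hθ u hu, Finset.mul_sum, Finset.sum_mul]
        _ = ∑ f, ∑ e, ∑ g, x f * Tm sf tf θ u e f g * x g :=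
            Finset.sum_congr rfl fun f _ => Finset.sum_comm
        _ = ∑ e, ∑ f, ∑ g, x f * Tm sf tf θ u e f g * x g := Finset.sum_comm
        _ = _ := Finset.sum_congr rfl fun e _ => quad_e sf tf θ u x e
    rw [hmain]
    have hlt : ∀ e ∈ Finset.univ (α := E),
        2 * (d1 (θ e) (u (sf e)) (u (tf e)) * (x (sf e))^2 +
          2 * d2 (θ e) (u (sf e)) (u (tf e)) * (x (sf e) * x (tf e)) +
          d1 (θ e) (u (tf e)) (u (sf e)) * (x (tf e))^2) ≤ (fun _ => (0:ℝ)) e :=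
      fun e _ => quad_nonpos _ _ _ _ _ (hθ e) (hu _) (hu _)
    have hstrict : 2 * (d1 (θ e0) (u (sf e0)) (u (tf e0)) * (x (sf e0))^2 +
          2 * d2 (θ e0) (u (sf e0)) (u (tf e0)) * (x (sf e0) * x (tf e0)) +
          d1 (θ e0) (u (tf e0)) (u (sf e0)) * (x (tf e0))^2) < 0 := by
      apply quad_neg _ _ _ _ _ (hθ e0) (hu _) (hu _)
      rcases he0 with h | h
      · exact Or.inl (h ▸ hf0)
      · exact Or.inr (h ▸ hf0)
    have := Finset.sum_lt_sum hlt ⟨e0, Finset.mem_univ e0, hstrict⟩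
    simpa using this
end

section
/- Assume every face is incident to at least one edge, so that c_f > 0 for all f ∈ F. For every K̂ : F → ℝ, the following are equivalent: (i) for every initial value u₀ : F → ℝ with u₀(f) < 0 for all f, there exist a differentiable curve u : [0,∞) → ℝ^F with u(0) = u₀, u(t)_f < 0 for all t ≥ 0 and f ∈ F, satisfying the combinatorial Ricci flow u'(t)_f = −c_f·u(t)_f − K̂_f for all t ≥ 0 and f ∈ F, together with u* : F → ℝ with u*(f) < 0 for all f and constants C > 0, λ > 0 such that ‖u(t) − u*‖ ≤ C·e^{−λt} for all t ≥ 0; (ii) K̂_f > 0 for all f ∈ F. -/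
open Real Finset

/-- The vertex weight `c_f = ∑_{e; e < f} w(e)` of a `(0,0,δ)` type generalized circle pattern,
where `w(e) = cot(θ(e)/2)`, `1/θ(e)` or `coth(θ(e)/2)` for `δ = 1, 0, -1` respectively.
The generalized combinatorial curvature is `K_f(u) = -c_f · u_f`. -/
noncomputable def cdeg {F E : Type*} [Fintype E] [DecidableEq F] (sf tf : E → F)
    (w : E → ℝ) (f : F) : ℝ :=
  ∑ e ∈ Finset.univ.filter (fun e => sf e = f), w e +
  ∑ e ∈ Finset.univ.filter (fun e => tf e = f), w e

lemma cdeg_pos {F E : Type*} [Fintype E] [DecidableEq F] (sf tf : E → F)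
    (w : E → ℝ) (hw : ∀ e, 0 < w e) (f : F) (hcov : ∃ e, sf e = f ∨ tf e = f) :
    0 < cdeg sf tf w f := by
  obtain ⟨e, he⟩ := hcov
  unfold cdeg
  have h1 : 0 ≤ ∑ e ∈ Finset.univ.filter (fun e => sf e = f), w e :=
    Finset.sum_nonneg fun e _ => (hw e).le
  have h2 : 0 ≤ ∑ e ∈ Finset.univ.filter (fun e => tf e = f), w e :=
    Finset.sum_nonneg fun e _ => (hw e).le
  rcases he with h | h
  · have : 0 < ∑ e ∈ Finset.univ.filter (fun e => sf e = f), w e :=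
      Finset.sum_pos' (fun e _ => (hw e).le) ⟨e, by simp [h], hw e⟩
    linarith
  · have : 0 < ∑ e ∈ Finset.univ.filter (fun e => tf e = f), w e :=
      Finset.sum_pos' (fun e _ => (hw e).le) ⟨e, by simp [h], hw e⟩
    linarith

/-- Uniqueness for the scalar linear ODE `v' = -c v - K`. -/
lemma ode_sol {c K : ℝ} (hc : 0 < c) {v : ℝ → ℝ}
    (hderiv : ∀ t ≥ (0:ℝ), HasDerivAt v (-c * v t - K) t) :
    ∀ T ≥ (0:ℝ), v T = (v 0 + K / c) * Real.exp (-c * T) - K / c := by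
  intro T hT
  set g : ℝ → ℝ := fun τ => (v τ + K / c) * Real.exp (c * τ) with hg
  have hgderiv : ∀ x ∈ Set.Ico (0:ℝ) T, HasDerivWithinAt g 0 (Set.Ici x) x := by
    intro x hx
    have hv := hderiv x hx.1
    have hexp : HasDerivAt (fun τ : ℝ => Real.exp (c * τ)) (Real.exp (c * x) * c) x := by
      have h1 : HasDerivAt (fun τ : ℝ => c * τ) c x := by
        simpa using (hasDerivAt_id x).const_mul c
      simpa [Function.comp_def] using (Real.hasDerivAt_exp (c * x)).comp x h1
    have := (hv.add_const (K / c)).mul hexp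
    have hzero : (-c * v x - K) * Real.exp (c * x) + (v x + K / c) * (Real.exp (c * x) * c) = 0 := by
      field_simp
      ring
    rw [hzero] at this
    exact this.hasDerivWithinAt
  have hcont : ContinuousOn g (Set.Icc 0 T) := by
    intro x hx
    have hv := hderiv x hx.1
    exact (((hv.add_const (K / c)).mul
      ((Real.hasDerivAt_exp (c * x)).comp x
        (by simpa using (hasDerivAt_id x).const_mul c))).continuousAt).continuousWithinAt
  have hconst := constant_of_has_deriv_right_zero hcont hgderiv T (Set.right_mem_Icc.mpr hT)
  have h0 : g 0 = v 0 + K / c := by simp [hg]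
  have hT' : (v T + K / c) * Real.exp (c * T) = v 0 + K / c := by
    rw [← h0]; exact hconst
  have hexp_ne : Real.exp (c * T) ≠ 0 := (Real.exp_pos _).ne'
  have : v T + K / c = (v 0 + K / c) * Real.exp (-(c * T)) := by
    rw [Real.exp_neg]
    rw [← hT', mul_assoc, mul_inv_cancel₀ hexp_ne, mul_one]
  rw [show -c * T = -(c * T) by ring]
  linarith [this]

theorem ricciFlow00delta_converges_iff {F E : Type*} [Fintype F] [Fintype E] [Nonempty F]
    [DecidableEq F] (sf tf : E → F) (w : E → ℝ) (hw : ∀ e, 0 < w e)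
    (hcov : ∀ f, ∃ e, sf e = f ∨ tf e = f) (Khat : F → ℝ) :
    (∀ u₀ : F → ℝ, (∀ f, u₀ f < 0) →
      ∃ u : ℝ → F → ℝ, u 0 = u₀ ∧ (∀ t ≥ (0 : ℝ), ∀ f, u t f < 0) ∧
        (∀ t ≥ (0 : ℝ), ∀ f,
          HasDerivAt (fun τ => u τ f) (-(cdeg sf tf w f) * u t f - Khat f) t) ∧
        ∃ ustar : F → ℝ, (∀ f, ustar f < 0) ∧
          ∃ C > (0 : ℝ), ∃ lam > (0 : ℝ),
            ∀ t ≥ (0 : ℝ), ‖u t - ustar‖ ≤ C * Real.exp (-lam * t)) ↔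
    ∀ f, 0 < Khat f := by
  have hc : ∀ f, 0 < cdeg sf tf w f := fun f => cdeg_pos sf tf w hw f (hcov f)
  constructor
  · intro H f
    obtain ⟨u, hu0, hneg, hderiv, ustar, hustar, C, hC, lam, hlam, hbound⟩ :=
      H (fun _ => -1) (fun _ => by norm_num)
    set c := cdeg sf tf w f with hcdef
    -- explicit formula for u t f
    have hsol : ∀ T ≥ (0:ℝ), u T f = (u 0 f + Khat f / c) * Real.exp (-c * T) - Khat f / c :=
      ode_sol (hc f) (fun t ht => hderiv t ht f)
    -- u t f tends to -Khat f / c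
    have hlim1 : Filter.Tendsto (fun T => u T f) Filter.atTop (nhds (-(Khat f / c))) := by
      have hexp : Filter.Tendsto (fun T : ℝ => Real.exp (-c * T)) Filter.atTop (nhds 0) := by
        apply Real.tendsto_exp_atBot.comp
        apply Filter.Tendsto.const_mul_atTop_of_neg (by linarith [hc f] : -c < 0) Filter.tendsto_id
      have : Filter.Tendsto
          (fun T : ℝ => (u 0 f + Khat f / c) * Real.exp (-c * T) - Khat f / c)
          Filter.atTop (nhds (-(Khat f / c))) := by
        have := (hexp.const_mul (u 0 f + Khat f / c)).sub_const (Khat f / c)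
        simpa using this
      apply this.congr'
      filter_upwards [Filter.eventually_ge_atTop (0:ℝ)] with T hT
      exact (hsol T hT).symm
    -- u t f tends to ustar f
    have hlim2 : Filter.Tendsto (fun T => u T f) Filter.atTop (nhds (ustar f)) := by
      rw [tendsto_iff_dist_tendsto_zero]
      apply squeeze_zero' (g := fun T => C * Real.exp (-lam * T))
      · filter_upwards with T; exact dist_nonneg
      · filter_upwards [Filter.eventually_ge_atTop (0:ℝ)] with T hT
        calc dist (u T f) (ustar f) = ‖(u T - ustar) f‖ := by
              simp [Real.dist_eq, Pi.sub_apply]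
          _ ≤ ‖u T - ustar‖ := norm_le_pi_norm _ f
          _ ≤ C * Real.exp (-lam * T) := hbound T hT
      · have hexp : Filter.Tendsto (fun T : ℝ => Real.exp (-lam * T)) Filter.atTop (nhds 0) := by
          apply Real.tendsto_exp_atBot.comp
          apply Filter.Tendsto.const_mul_atTop_of_neg (by linarith : -lam < 0) Filter.tendsto_id
        simpa using hexp.const_mul C
    have heq : ustar f = -(Khat f / c) := tendsto_nhds_unique hlim2 hlim1
    have h1 : 0 < Khat f / c := by
      have := hustar f
      rw [heq] at this
      linarith
    have := mul_pos h1 (hc f)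
    rwa [div_mul_cancel₀ _ (hc f).ne'] at this
  · intro hK u₀ hu₀
    set c := cdeg sf tf w with hcdef
    set a : F → ℝ := fun f => u₀ f + Khat f / c f with ha
    set b : F → ℝ := fun f => Khat f / c f with hb
    have hbpos : ∀ f, 0 < b f := fun f => div_pos (hK f) (hc f)
    refine ⟨fun t f => a f * Real.exp (-(c f) * t) - b f, ?_, ?_, ?_, ?_⟩
    · funext f; simp [ha, hb]
    · intro t ht f
      show a f * Real.exp (-(c f) * t) - b f < 0
      have hE0 : 0 < Real.exp (-(c f) * t) := Real.exp_pos _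
      have hE1 : Real.exp (-(c f) * t) ≤ 1 := by
        apply Real.exp_le_one_iff.mpr
        have := mul_nonneg (hc f).le ht
        nlinarith
      rcases le_or_gt (a f) 0 with h | h
      · have : a f * Real.exp (-(c f) * t) ≤ 0 := mul_nonpos_of_nonpos_of_nonneg h hE0.le
        linarith [hbpos f]
      · have : a f * Real.exp (-(c f) * t) ≤ a f := by
          nlinarith
        have hu := hu₀ f
        have : a f * Real.exp (-(c f) * t) - b f ≤ a f - b f := by linarith
        have hab : a f - b f = u₀ f := by simp [ha, hb]
        linarith
    · intro t ht f
      have h1 : HasDerivAt (fun τ : ℝ => -(c f) * τ) (-(c f)) t := by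
        simpa using (hasDerivAt_id t).const_mul (-(c f))
      have hexp : HasDerivAt (fun τ : ℝ => Real.exp (-(c f) * τ))
          (Real.exp (-(c f) * t) * (-(c f))) t := by
        simpa [Function.comp_def] using (Real.hasDerivAt_exp (-(c f) * t)).comp t h1
      have := (hexp.const_mul (a f)).sub_const (b f)
      refine this.congr_deriv ?_
      have hcne := (hc f).ne'
      simp only [ha, hb]
      field_simp
      ring
    · refine ⟨fun f => -b f, fun f => by show -b f < 0; linarith [hbpos f], ?_⟩
      have hne : (Finset.univ : Finset F).Nonempty := Finset.univ_nonempty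
      set lam : ℝ := Finset.univ.inf' hne (fun f => c f) with hlam
      set C : ℝ := (Finset.univ.sup' hne (fun f => |a f|)) + 1 with hCdef
      have hlampos : 0 < lam := by
        rw [hlam, Finset.lt_inf'_iff]
        exact fun f _ => hc f
      have hCpos : 0 < C := by
        rw [hCdef]
        have : |a (Classical.arbitrary F)| ≤ Finset.univ.sup' hne (fun f => |a f|) :=
          Finset.le_sup' (fun f => |a f|) (Finset.mem_univ _)
        have := abs_nonneg (a (Classical.arbitrary F))
        linarith
      refine ⟨C, hCpos, lam, hlampos, ?_⟩
      intro t ht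
      rw [pi_norm_le_iff_of_nonneg (by positivity)]
      intro f
      have h1 : ‖(fun g => a g * Real.exp (-(c g) * t) - b g) f - (fun g => -b g) f‖
          = |a f| * Real.exp (-(c f) * t) := by
        simp [Real.norm_eq_abs, abs_mul, Real.abs_exp, sub_neg_eq_add]
      calc ‖((fun g => a g * Real.exp (-(c g) * t) - b g) - fun g => -b g) f‖
          = |a f| * Real.exp (-(c f) * t) := by
            simp only [Pi.sub_apply]; exact h1
        _ ≤ C * Real.exp (-lam * t) := by
            apply mul_le_mul
            · rw [hCdef]
              have : |a f| ≤ Finset.univ.sup' hne (fun g => |a g|) :=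
                Finset.le_sup' (fun g => |a g|) (Finset.mem_univ f)
              linarith
            · apply Real.exp_le_exp.mpr
              have hle : lam ≤ c f := Finset.inf'_le _ (Finset.mem_univ f)
              nlinarith
            · positivity
            · positivity
end

section
/- Assume every face is incident to at least one edge, so that c_f > 0 for all f ∈ F. For every K̂ : F → ℝ, the following are equivalent: (i) for every initial value u₀ : F → ℝ with u₀(f) < 0 for all f, there exist a differentiable curve u : [0,∞) → ℝ^F with u(0) = u₀, u(t)_f < 0 for all t ≥ 0 and f ∈ F, satisfying the combinatorial Calabi flow u'(t)_f = −c_f²·u(t)_f − c_f·K̂_f for all t ≥ 0 and f ∈ F, together with u* : F → ℝ with u*(f) < 0 for all f and constants C > 0, λ > 0 such that ‖u(t) − u*‖ ≤ C·e^{−λt} for all t ≥ 0; (ii) K̂_f > 0 for all f ∈ F. -/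
open Real Finset Filter Topology

private lemma sol_eq (c K : ℝ) (v : ℝ → ℝ)
    (hv : ∀ t ≥ (0:ℝ), HasDerivAt v (-c^2 * v t - c * K) t) (hc : c ≠ 0) :
    ∀ t ≥ (0:ℝ), v t = (v 0 + K/c) * Real.exp (-c^2 * t) - K/c := by
  set h : ℝ → ℝ := fun t => Real.exp (c^2 * t) * (v t + K/c) with hh
  have hderiv : ∀ t ≥ (0:ℝ), HasDerivAt h 0 t := by
    intro t ht
    have h1 : HasDerivAt (fun τ => Real.exp (c^2 * τ)) (Real.exp (c^2*t) * c^2) t := by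
      simpa using (((hasDerivAt_id t).const_mul (c^2)).exp)
    have h2 : HasDerivAt (fun τ => v τ + K/c) (-c^2 * v t - c * K) t :=
      (hv t ht).add_const _
    have := h1.mul h2
    convert this using 1
    case e'_4 => rfl
    case e'_5 => rfl
    case e'_8 => rfl
    case e'_9 =>
      field_simp
      ring
  have hconst : ∀ t ≥ (0:ℝ), h t = h 0 := by
    intro t ht
    have := constant_of_has_deriv_right_zero (f := h) (a := 0) (b := t)
      (fun x hx => ((hderiv x hx.1).continuousAt).continuousWithinAt)
      (fun x hx => ((hderiv x hx.1).hasDerivWithinAt))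
    exact this t ⟨ht, le_refl t⟩
  intro t ht
  have h0 : h 0 = v 0 + K / c := by simp [hh]
  have heq : Real.exp (c^2 * t) * (v t + K/c) = v 0 + K / c := by
    have := hconst t ht; rw [h0] at this; simpa [hh] using this
  have hne : Real.exp (c^2 * t) ≠ 0 := (Real.exp_pos _).ne'
  have hrw : Real.exp (-c^2 * t) = (Real.exp (c^2 * t))⁻¹ := by
    rw [← Real.exp_neg]; ring_nf
  rw [hrw]
  have key : v t + K/c = (v 0 + K/c) * (Real.exp (c^2*t))⁻¹ := by
    rw [eq_mul_inv_iff_mul_eq₀ hne]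
    linarith [heq]
  linarith [key]

theorem calabiFlow00delta_converges_iff {F E : Type*} [Fintype F] [Fintype E] [Nonempty F]
    [DecidableEq F] (sf tf : E → F) (w : E → ℝ) (hw : ∀ e, 0 < w e)
    (hcov : ∀ f, ∃ e, sf e = f ∨ tf e = f) (Khat : F → ℝ) :
    (∀ u₀ : F → ℝ, (∀ f, u₀ f < 0) →
      ∃ u : ℝ → F → ℝ, u 0 = u₀ ∧ (∀ t ≥ (0 : ℝ), ∀ f, u t f < 0) ∧
        (∀ t ≥ (0 : ℝ), ∀ f,
          HasDerivAt (fun τ => u τ f)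
            (-(cdeg sf tf w f) ^ 2 * u t f - cdeg sf tf w f * Khat f) t) ∧
        ∃ ustar : F → ℝ, (∀ f, ustar f < 0) ∧
          ∃ C > (0 : ℝ), ∃ lam > (0 : ℝ),
            ∀ t ≥ (0 : ℝ), ‖u t - ustar‖ ≤ C * Real.exp (-lam * t)) ↔
    ∀ f, 0 < Khat f := by
  have cpos : ∀ f, 0 < cdeg sf tf w f := by
    intro f
    obtain ⟨e, he⟩ := hcov f
    have hs : (0:ℝ) ≤ ∑ e ∈ Finset.univ.filter (fun e => sf e = f), w e :=
      Finset.sum_nonneg fun e _ => (hw e).le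
    have ht : (0:ℝ) ≤ ∑ e ∈ Finset.univ.filter (fun e => tf e = f), w e :=
      Finset.sum_nonneg fun e _ => (hw e).le
    rcases he with h | h
    · have : (0:ℝ) < ∑ e ∈ Finset.univ.filter (fun e => sf e = f), w e :=
        Finset.sum_pos (fun e _ => hw e) ⟨e, Finset.mem_filter.mpr ⟨Finset.mem_univ _, h⟩⟩
      unfold cdeg; linarith
    · have : (0:ℝ) < ∑ e ∈ Finset.univ.filter (fun e => tf e = f), w e :=
        Finset.sum_pos (fun e _ => hw e) ⟨e, Finset.mem_filter.mpr ⟨Finset.mem_univ _, h⟩⟩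
      unfold cdeg; linarith
  constructor
  · -- convergence for all initial data implies Khat > 0
    intro H f
    obtain ⟨u, h0, hneg, hderiv, ustar, hustar, C, hC, lam, hlam, hbound⟩ :=
      H (fun _ => -1) (fun _ => by norm_num)
    set c := cdeg sf tf w f with hc
    have hform := sol_eq c (Khat f) (fun t => u t f) (fun t ht => hderiv t ht f) (cpos f).ne'
    have hexp : Tendsto (fun t : ℝ => Real.exp (-c^2 * t)) atTop (𝓝 0) := by
      apply Real.tendsto_exp_atBot.comp
      have : Tendsto (fun t : ℝ => c^2 * t) atTop atTop :=
        Tendsto.const_mul_atTop (pow_pos (cpos f) 2) tendsto_id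
      exact (tendsto_neg_atTop_atBot.comp this).congr (fun t => by
        simp [Function.comp])
    have lim1 : Tendsto (fun t => u t f) atTop (𝓝 (-(Khat f / c))) := by
      have base : Tendsto (fun t : ℝ => (u 0 f + Khat f / c) * Real.exp (-c^2 * t) - Khat f / c)
          atTop (𝓝 (-(Khat f / c))) := by
        have := (hexp.const_mul (u 0 f + Khat f / c)).sub_const (Khat f / c)
        simpa using this
      exact base.congr' (by
        filter_upwards [eventually_ge_atTop (0:ℝ)] with t ht
        exact (hform t ht).symm)
    have lim2 : Tendsto (fun t => u t f) atTop (𝓝 (ustar f)) := by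
      have hz : Tendsto (fun t : ℝ => C * Real.exp (-lam * t)) atTop (𝓝 0) := by
        have hexp2 : Tendsto (fun t : ℝ => Real.exp (-lam * t)) atTop (𝓝 0) := by
          apply Real.tendsto_exp_atBot.comp
          have : Tendsto (fun t : ℝ => lam * t) atTop atTop :=
            Tendsto.const_mul_atTop hlam tendsto_id
          exact (tendsto_neg_atTop_atBot.comp this).congr (fun t => by
        simp [Function.comp])
        simpa using hexp2.const_mul C
      have hsq : Tendsto (fun t => u t f - ustar f) atTop (𝓝 0) := by
        apply squeeze_zero_norm' _ hz
        filter_upwards [eventually_ge_atTop (0:ℝ)] with t ht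
        calc ‖u t f - ustar f‖ = ‖(u t - ustar) f‖ := by simp
          _ ≤ ‖u t - ustar‖ := norm_le_pi_norm _ f
          _ ≤ C * Real.exp (-lam * t) := hbound t ht
      have := hsq.add_const (ustar f)
      simpa using this
    have heq : -(Khat f / c) = ustar f := tendsto_nhds_unique lim1 lim2
    have : 0 < Khat f / c := by linarith [hustar f]
    rcases div_pos_iff.mp this with ⟨h1, _⟩ | ⟨_, h2⟩
    · exact h1
    · exact absurd (cpos f) (by linarith)
  · -- Khat > 0 implies convergence
    intro hK u₀ hu₀
    refine ⟨fun t f => (u₀ f + Khat f / cdeg sf tf w f) *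
        Real.exp (-(cdeg sf tf w f)^2 * t) - Khat f / cdeg sf tf w f, ?_, ?_, ?_, ?_⟩
    · funext f; simp
    · intro t ht f
      have hc := cpos f
      have hKc : 0 < Khat f / cdeg sf tf w f := div_pos (hK f) hc
      have hep : 0 < Real.exp (-(cdeg sf tf w f)^2 * t) := Real.exp_pos _
      rcases le_or_gt (u₀ f + Khat f / cdeg sf tf w f) 0 with h | h
      · nlinarith
      · have he1 : Real.exp (-(cdeg sf tf w f)^2 * t) ≤ 1 := by
          rw [Real.exp_le_one_iff]
          nlinarith
        have := mul_le_of_le_one_right h.le he1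
        linarith [hu₀ f]
    · intro t ht f
      have hc := (cpos f).ne'
      have h1 : HasDerivAt (fun τ => Real.exp (-(cdeg sf tf w f)^2 * τ))
          (Real.exp (-(cdeg sf tf w f)^2 * t) * (-(cdeg sf tf w f)^2)) t := by
        simpa using (((hasDerivAt_id t).const_mul (-(cdeg sf tf w f)^2)).exp)
      have := ((h1.const_mul (u₀ f + Khat f / cdeg sf tf w f)).sub_const
        (Khat f / cdeg sf tf w f))
      convert this using 1
      case e'_4 => rfl
      case e'_5 => rfl
      field_simp
      ring
    · refine ⟨fun f => -(Khat f / cdeg sf tf w f),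
        fun f => neg_neg_iff_pos.mpr (div_pos (hK f) (cpos f)), ?_⟩
      set lam := Finset.univ.inf' Finset.univ_nonempty
        (fun f : F => (cdeg sf tf w f)^2) with hlamdef
      set C := Finset.univ.sup' Finset.univ_nonempty
        (fun f : F => |u₀ f + Khat f / cdeg sf tf w f|) + 1 with hCdef
      have hCpos : 0 < C := by
        obtain ⟨f⟩ := ‹Nonempty F›
        have h1 := Finset.le_sup' (fun g : F => |u₀ g + Khat g / cdeg sf tf w g|)
          (Finset.mem_univ f)
        have h2 := abs_nonneg (u₀ f + Khat f / cdeg sf tf w f)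
        rw [hCdef]
        linarith
      have hlampos : 0 < lam := by
        rw [hlamdef, Finset.lt_inf'_iff]
        intro f _
        exact pow_pos (cpos f) 2
      refine ⟨C, hCpos, lam, hlampos, ?_⟩
      intro t ht
      have hnn : 0 ≤ C * Real.exp (-lam * t) := by positivity
      rw [pi_norm_le_iff_of_nonneg hnn]
      intro f
      have e1 : Real.exp (-(cdeg sf tf w f)^2 * t) ≤ Real.exp (-lam * t) := by
        apply Real.exp_le_exp.mpr
        have : lam ≤ (cdeg sf tf w f)^2 :=
          Finset.inf'_le _ (Finset.mem_univ f)
        nlinarith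
      have e2 : |u₀ f + Khat f / cdeg sf tf w f| ≤ C := by
        have h1 := Finset.le_sup' (fun g : F => |u₀ g + Khat g / cdeg sf tf w g|)
          (Finset.mem_univ f)
        rw [hCdef]
        linarith
      have : ‖(u₀ f + Khat f / cdeg sf tf w f) * Real.exp (-(cdeg sf tf w f)^2 * t)‖
          ≤ C * Real.exp (-lam * t) := by
        rw [Real.norm_eq_abs, abs_mul, abs_of_pos (Real.exp_pos _)]
        exact mul_le_mul e2 e1 (Real.exp_pos _).le hCpos.le
      simpa using this
end

section
/- Let K̂ : F → ℝ and let u : [0,∞) → ℝ^F be a differentiable curve with u(t)_f < 0 for all t ≥ 0 and f ∈ F, satisfying the combinatorial Ricci flow u'(t)_f = K_f(u(t)) − K̂_f for all t ≥ 0 and f ∈ F. Then the combinatorial Calabi energy t ↦ (1/2)∑_{f ∈ F} (K_f(u(t)) − K̂_f)² is non-increasing on [0,∞). -/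
open Real Finset

/-- Common denominator of the partial derivatives of `genAngle`. -/
noncomputable def Dden (θ x y : ℝ) : ℝ := 16 * θ ^ 2 * x ^ 2 + (x ^ 2 - y ^ 2 - 4 * θ ^ 2) ^ 2

lemma Dden_symm (θ x y : ℝ) : Dden θ y x = Dden θ x y := by unfold Dden; ring

lemma Dden_pos {θ : ℝ} (hθ : 0 < θ) (x y : ℝ) : 0 < Dden θ x y := by
  rcases eq_or_ne x 0 with h | h
  · subst h
    unfold Dden
    nlinarith [sq_nonneg y, sq_nonneg (y ^ 2), sq_nonneg θ, mul_pos hθ hθ,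
      sq_nonneg (y ^ 2 + 4 * θ ^ 2)]
  · unfold Dden
    have h1 : 0 < 16 * θ ^ 2 * x ^ 2 := by positivity
    nlinarith [sq_nonneg (x ^ 2 - y ^ 2 - 4 * θ ^ 2)]

/-- `∂ genAngle / ∂ u₁`. -/
noncomputable def Pa (θ x y : ℝ) : ℝ := -(4 * θ * (x ^ 2 + y ^ 2 + 4 * θ ^ 2)) / Dden θ x y

/-- `∂ genAngle / ∂ u₂`. -/
noncomputable def Pb (θ x y : ℝ) : ℝ := 8 * θ * x * y / Dden θ x y

lemma hasDerivAt_genAngle {θ : ℝ} (hθ : 0 < θ) {a b : ℝ → ℝ} {a' b' t : ℝ}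
    (ha : HasDerivAt a a' t) (hb : HasDerivAt b b' t) (hat : a t ≠ 0) :
    HasDerivAt (fun τ => genAngle θ (a τ) (b τ))
      (Pa θ (a t) (b t) * a' + Pb θ (a t) (b t) * b') t := by
  have hnum : HasDerivAt (fun τ => (a τ) ^ 2 - (b τ) ^ 2 - 4 * θ ^ 2)
      (2 * a t ^ 1 * a' - 2 * b t ^ 1 * b') t := ((ha.pow 2).sub (hb.pow 2)).sub_const _
  have hden : HasDerivAt (fun τ => 4 * θ * (a τ)) (4 * θ * a') t := ha.const_mul _
  have hd0 : 4 * θ * a t ≠ 0 := by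
    exact mul_ne_zero (by positivity) hat
  have hq := (hnum.div hden hd0).arctan
  have h2 := hq.const_sub (π / 2)
  refine h2.congr_deriv (Eq.symm ?_)
  have hD := (Dden_pos hθ (a t) (b t)).ne'
  rw [Pa, Pb]
  have hkey : 1 + ((a t ^ 2 - b t ^ 2 - 4 * θ ^ 2) / (4 * θ * a t)) ^ 2
      = Dden θ (a t) (b t) / (4 * θ * a t) ^ 2 := by
    rw [Dden]
    field_simp
    ring
  simp only [Pi.div_apply]
  rw [hkey]
  have h4 : (4 * θ * a t) ^ 2 ≠ 0 := pow_ne_zero _ hd0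
  field_simp
  ring

lemma edge_nonpos {θ : ℝ} (hθ : 0 < θ) (a b x y : ℝ) :
    x * (Pa θ a b * x + Pb θ a b * y) + y * (Pa θ b a * y + Pb θ b a * x) ≤ 0 := by
  have hD := Dden_pos hθ a b
  have h : x * (Pa θ a b * x + Pb θ a b * y) + y * (Pa θ b a * y + Pb θ b a * x)
      = (-(4 * θ * (a ^ 2 + b ^ 2 + 4 * θ ^ 2)) * (x ^ 2 + y ^ 2)
          + 16 * θ * a * b * x * y) / Dden θ a b := by
    rw [Pa, Pa, Pb, Pb, Dden_symm]
    field_simp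
    ring
  rw [h]
  apply div_nonpos_of_nonpos_of_nonneg _ hD.le
  nlinarith [mul_nonneg hθ.le (sq_nonneg (a * x - b * y)),
    mul_nonneg hθ.le (sq_nonneg (a * y - b * x)),
    mul_nonneg hθ.le (sq_nonneg (θ * x)), mul_nonneg hθ.le (sq_nonneg (θ * y))]

/-- At any time where the flow equation holds and the `u`-values are negative,
the Calabi energy has a nonpositive derivative. -/
lemma calabiEnergy_hasDerivAt {F E : Type*} [Fintype F] [Fintype E] [DecidableEq F]
    (sf tf : E → F) (θ : E → ℝ) (hθ : ∀ e, 0 < θ e) (Khat : F → ℝ) (u : ℝ → F → ℝ) (t : ℝ)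
    (hneg : ∀ f, u t f < 0)
    (hflow : ∀ f, HasDerivAt (fun τ => u τ f) (curv sf tf θ (u t) f - Khat f) t) :
    ∃ d ≤ 0, HasDerivAt (fun τ => (1 / 2) * ∑ f, (curv sf tf θ (u τ) f - Khat f) ^ 2) d t := by
  classical
  set v : F → ℝ := u t with hv
  set x : F → ℝ := fun f => curv sf tf θ v f - Khat f with hx
  set A : E → ℝ := fun e => Pa (θ e) (v (sf e)) (v (tf e)) * x (sf e)
      + Pb (θ e) (v (sf e)) (v (tf e)) * x (tf e) with hA
  set B : E → ℝ := fun e => Pa (θ e) (v (tf e)) (v (sf e)) * x (tf e)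
      + Pb (θ e) (v (tf e)) (v (sf e)) * x (sf e) with hB
  set Kd : F → ℝ := fun f =>
      2 * ∑ e ∈ Finset.univ.filter (fun e => sf e = f), A e
      + 2 * ∑ e ∈ Finset.univ.filter (fun e => tf e = f), B e with hKd
  have hK : ∀ f, HasDerivAt (fun τ => curv sf tf θ (u τ) f) (Kd f) t := by
    intro f
    have h1 : HasDerivAt
        (fun τ => ∑ e ∈ Finset.univ.filter (fun e => sf e = f),
          genAngle (θ e) (u τ (sf e)) (u τ (tf e)))
        (∑ e ∈ Finset.univ.filter (fun e => sf e = f), A e) t := by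
      refine HasDerivAt.fun_sum fun e _ => ?_
      exact hasDerivAt_genAngle (hθ e) (hflow (sf e)) (hflow (tf e)) (hneg (sf e)).ne
    have h2 : HasDerivAt
        (fun τ => ∑ e ∈ Finset.univ.filter (fun e => tf e = f),
          genAngle (θ e) (u τ (tf e)) (u τ (sf e)))
        (∑ e ∈ Finset.univ.filter (fun e => tf e = f), B e) t := by
      refine HasDerivAt.fun_sum fun e _ => ?_
      exact hasDerivAt_genAngle (hθ e) (hflow (tf e)) (hflow (sf e)) (hneg (tf e)).ne
    simpa [curv, hKd, Pi.add_def] using (h1.const_mul 2).add (h2.const_mul 2)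
  have hE : HasDerivAt (fun τ => (1 / 2) * ∑ f, (curv sf tf θ (u τ) f - Khat f) ^ 2)
      (∑ f, x f * Kd f) t := by
    have h1 : HasDerivAt (fun τ => ∑ f, (curv sf tf θ (u τ) f - Khat f) ^ 2)
        (∑ f, 2 * (curv sf tf θ v f - Khat f) ^ 1 * Kd f) t :=
      HasDerivAt.fun_sum fun f _ => ((hK f).sub_const (Khat f)).fun_pow 2
    have h2 := h1.const_mul (1 / 2 : ℝ)
    refine h2.congr_deriv (Eq.symm ?_)
    rw [Finset.mul_sum]
    refine Finset.sum_congr rfl fun f _ => ?_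
    simp [hx]
    ring
  refine ⟨∑ f, x f * Kd f, ?_, hE⟩
  have hsplit : ∑ f, x f * Kd f
      = 2 * ∑ e, (x (sf e) * A e + x (tf e) * B e) := by
    have e1 : ∀ f, x f * Kd f
        = 2 * ∑ e ∈ Finset.univ.filter (fun e => sf e = f), x (sf e) * A e
          + 2 * ∑ e ∈ Finset.univ.filter (fun e => tf e = f), x (tf e) * B e := by
      intro f
      have c1 : ∑ e ∈ Finset.univ.filter (fun e => sf e = f), x (sf e) * A e
          = ∑ e ∈ Finset.univ.filter (fun e => sf e = f), x f * A e := by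
        refine Finset.sum_congr rfl fun e he => ?_
        rw [(Finset.mem_filter.mp he).2]
      have c2 : ∑ e ∈ Finset.univ.filter (fun e => tf e = f), x (tf e) * B e
          = ∑ e ∈ Finset.univ.filter (fun e => tf e = f), x f * B e := by
        refine Finset.sum_congr rfl fun e he => ?_
        rw [(Finset.mem_filter.mp he).2]
      rw [c1, c2, ← Finset.mul_sum, ← Finset.mul_sum, hKd]
      ring
    calc ∑ f, x f * Kd f
        = ∑ f, (2 * ∑ e ∈ Finset.univ.filter (fun e => sf e = f), x (sf e) * A e
          + 2 * ∑ e ∈ Finset.univ.filter (fun e => tf e = f), x (tf e) * B e) :=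
          Finset.sum_congr rfl fun f _ => e1 f
      _ = 2 * ∑ f, ∑ e ∈ Finset.univ.filter (fun e => sf e = f), x (sf e) * A e
          + 2 * ∑ f, ∑ e ∈ Finset.univ.filter (fun e => tf e = f), x (tf e) * B e := by
          rw [Finset.sum_add_distrib, ← Finset.mul_sum, ← Finset.mul_sum]
      _ = 2 * ∑ e, x (sf e) * A e + 2 * ∑ e, x (tf e) * B e := by
          rw [Finset.sum_fiberwise_of_maps_to (fun e _ => Finset.mem_univ (sf e)),
            Finset.sum_fiberwise_of_maps_to (fun e _ => Finset.mem_univ (tf e))]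
      _ = 2 * ∑ e, (x (sf e) * A e + x (tf e) * B e) := by
          rw [Finset.sum_add_distrib]; ring
  rw [hsplit]
  have hterm : ∀ e ∈ (Finset.univ : Finset E), x (sf e) * A e + x (tf e) * B e ≤ 0 := by
    intro e _
    exact edge_nonpos (hθ e) (v (sf e)) (v (tf e)) (x (sf e)) (x (tf e))
  have := Finset.sum_nonpos hterm
  linarith

theorem calabiEnergy_antitone_along_ricciFlow {F E : Type*} [Fintype F] [Fintype E]
    [Nonempty F] [DecidableEq F] (sf tf : E → F) (θ : E → ℝ) (hθ : ∀ e, 0 < θ e)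
    (Khat : F → ℝ) (u : ℝ → F → ℝ)
    (hneg : ∀ t ≥ (0 : ℝ), ∀ f, u t f < 0)
    (hflow : ∀ t ≥ (0 : ℝ), ∀ f,
      HasDerivAt (fun τ => u τ f) (curv sf tf θ (u t) f - Khat f) t) :
    AntitoneOn (fun t => (1 / 2) * ∑ f, (curv sf tf θ (u t) f - Khat f) ^ 2)
      (Set.Ici (0 : ℝ)) := by
  have hE : ∀ t ∈ Set.Ici (0 : ℝ), ∃ d ≤ 0,
      HasDerivAt (fun τ => (1 / 2) * ∑ f, (curv sf tf θ (u τ) f - Khat f) ^ 2) d t :=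
    fun t ht => calabiEnergy_hasDerivAt sf tf θ hθ Khat u t (hneg t ht) (hflow t ht)
  refine antitoneOn_of_deriv_nonpos (convex_Ici 0) ?_ ?_ ?_
  · intro t ht
    obtain ⟨d, _, hd⟩ := hE t ht
    exact hd.continuousAt.continuousWithinAt
  · intro t ht
    rw [interior_Ici] at ht
    obtain ⟨d, _, hd⟩ := hE t (Set.mem_Ici.mpr (le_of_lt (Set.mem_Ioi.mp ht)))
    exact hd.differentiableAt.differentiableWithinAt
  · intro t ht
    rw [interior_Ici] at ht
    obtain ⟨d, hd0, hd⟩ := hE t (Set.mem_Ici.mpr (le_of_lt (Set.mem_Ioi.mp ht)))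
    rw [hd.deriv]
    exact hd0
end
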